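/- arXiv:0709.0852 — 2 statements merged into one kernel-verified Lean document; each statement's English description precedes it below -/
import Mathlib

section
/- Let τ > 0 and m₁, m₂ ∈ ℝ. Define h(x,t) = (m₁ - m₂)/(2√(2τ)) · (3√τ·x + t) and u(x,t) = (m₂·exp(h(x,t)) + m₁)/(exp(h(x,t)) + 1). With λ = 1, m₃ determined by the constraint B = -4(m₁+m₂+m₃)√τ/√2, and additionally assuming 2m₃ + m₂ + m₁ = 0, the function u satisfies the generalized Burgers equation τ·u_tt - u_xx + 2√2·u·u_x + B·u_t = (u - m₁)(u - m₂)(u - m₃). -/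
open Real

lemma hasDerivAt_kink (m₁ m₂ b : ℝ) (φ : ℝ → ℝ) (hφ : ∀ s, HasDerivAt φ b s) (t : ℝ) :
    HasDerivAt (fun s => (m₂ * Real.exp (φ s) + m₁) / (Real.exp (φ s) + 1))
      (b * (m₂ - m₁) * Real.exp (φ t) / (Real.exp (φ t) + 1) ^ 2) t := by
  have hE : HasDerivAt (fun s => Real.exp (φ s)) (Real.exp (φ t) * b) t := (hφ t).exp
  have hN : HasDerivAt (fun s => m₂ * Real.exp (φ s) + m₁)
      (m₂ * (Real.exp (φ t) * b)) t := (hE.const_mul m₂).add_const m₁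
  have hDen : HasDerivAt (fun s => Real.exp (φ s) + 1) (Real.exp (φ t) * b) t := hE.add_const 1
  have hne : Real.exp (φ t) + 1 ≠ 0 := by positivity
  have := hN.div hDen hne
  refine this.congr_deriv ?_
  rw [div_eq_div_iff (by positivity) (by positivity)]
  ring

lemma hasDerivAt_kink' (m₁ m₂ b : ℝ) (φ : ℝ → ℝ) (hφ : ∀ s, HasDerivAt φ b s) (t : ℝ) :
    HasDerivAt (fun s => b * (m₂ - m₁) * Real.exp (φ s) / (Real.exp (φ s) + 1) ^ 2)
      (b ^ 2 * (m₂ - m₁) * Real.exp (φ t) * (1 - Real.exp (φ t)) / (Real.exp (φ t) + 1) ^ 3) t := by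
  have hE : HasDerivAt (fun s => Real.exp (φ s)) (Real.exp (φ t) * b) t := (hφ t).exp
  have hN : HasDerivAt (fun s => b * (m₂ - m₁) * Real.exp (φ s))
      (b * (m₂ - m₁) * (Real.exp (φ t) * b)) t := hE.const_mul _
  have hDen : HasDerivAt (fun s => (Real.exp (φ s) + 1) ^ 2)
      (2 * (Real.exp (φ t) + 1) ^ 1 * (Real.exp (φ t) * b)) t := (hE.add_const 1).pow 2
  have hne : (Real.exp (φ t) + 1) ^ 2 ≠ 0 := by positivity
  have := hN.div hDen hne
  refine this.congr_deriv ?_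
  have hne1 : Real.exp (φ t) + 1 ≠ 0 := by positivity
  rw [div_eq_div_iff (by positivity) (by positivity)]
  ring

/-- The generalized Burgers equation (κ = 1, A = 2√2, λ = 1):
τ·u_tt − u_xx + 2√2·u·u_x + B·u_t = (u − m₁)(u − m₂)(u − m₃). -/
def SatisfiesGBE (τ B m₁ m₂ m₃ : ℝ) (u : ℝ → ℝ → ℝ) : Prop :=
  ∀ x t,
    τ * deriv (fun t' => deriv (fun s => u x s) t') t
      - deriv (fun x' => deriv (fun y => u y t) x') x
      + 2 * Real.sqrt 2 * u x t * deriv (fun y => u y t) x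
      + B * deriv (fun s => u x s) t
    = (u x t - m₁) * (u x t - m₂) * (u x t - m₃)

set_option maxHeartbeats 1000000 in
theorem stmt_7 (τ B m₁ m₂ m₃ : ℝ) (hτ : 0 < τ)
    (hB : B = -(4 * (m₁ + m₂ + m₃) * Real.sqrt τ) / Real.sqrt 2)
    (hm : 2 * m₃ + m₂ + m₁ = 0)
    (h : ℝ → ℝ → ℝ)
    (hh : ∀ x t, h x t = (m₁ - m₂) / (2 * Real.sqrt (2 * τ)) * (3 * Real.sqrt τ * x + t))
    (u : ℝ → ℝ → ℝ)
    (hu : ∀ x t, u x t = (m₂ * Real.exp (h x t) + m₁) / (Real.exp (h x t) + 1)) :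
    SatisfiesGBE τ B m₁ m₂ m₃ u := by
  intro x t
  have hst : 0 < Real.sqrt τ := Real.sqrt_pos.2 hτ
  have hs2 : 0 < Real.sqrt 2 := Real.sqrt_pos.2 (by norm_num)
  have hsmul : Real.sqrt (2 * τ) = Real.sqrt 2 * Real.sqrt τ := Real.sqrt_mul (by norm_num) τ
  have hstsq : Real.sqrt τ * Real.sqrt τ = τ := Real.mul_self_sqrt hτ.le
  have hs2sq : Real.sqrt 2 * Real.sqrt 2 = (2:ℝ) := Real.mul_self_sqrt (by norm_num)
  set c : ℝ := (m₁ - m₂) / (2 * Real.sqrt (2 * τ)) with hc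
  set a : ℝ := 3 * c * Real.sqrt τ with ha
  -- derivatives of h
  have hφt : ∀ s, HasDerivAt (fun s => h x s) c s := by
    intro s
    have heq : (fun s => h x s) = fun s => c * (3 * Real.sqrt τ * x) + c * s := by
      funext s; rw [hh]; ring
    rw [heq]
    simpa using ((hasDerivAt_id s).const_mul c).const_add (c * (3 * Real.sqrt τ * x))
  have hφx : ∀ y, HasDerivAt (fun y => h y t) a y := by
    intro y
    have heq : (fun y => h y t) = fun y => (c * (3 * Real.sqrt τ)) * y + c * t := by
      funext y; rw [hh]; ring
    rw [heq]
    have := ((hasDerivAt_id y).const_mul (c * (3 * Real.sqrt τ))).add_const (c * t)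
    have ha' : a = c * (3 * Real.sqrt τ) := by rw [ha]; ring
    rw [ha']; simpa using this
  -- first derivatives
  have hut : ∀ t', deriv (fun s => u x s) t'
      = c * (m₂ - m₁) * Real.exp (h x t') / (Real.exp (h x t') + 1) ^ 2 := by
    intro t'
    have heq : (fun s => u x s)
        = fun s => (m₂ * Real.exp (h x s) + m₁) / (Real.exp (h x s) + 1) := by
      funext s; rw [hu]
    rw [heq]
    exact (hasDerivAt_kink m₁ m₂ c _ hφt t').deriv
  have hux : ∀ y, deriv (fun y => u y t) y
      = a * (m₂ - m₁) * Real.exp (h y t) / (Real.exp (h y t) + 1) ^ 2 := by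
    intro y
    have heq : (fun y => u y t)
        = fun y => (m₂ * Real.exp (h y t) + m₁) / (Real.exp (h y t) + 1) := by
      funext y; rw [hu]
    rw [heq]
    exact (hasDerivAt_kink m₁ m₂ a _ hφx y).deriv
  -- second derivatives
  have hutt : deriv (fun t' => deriv (fun s => u x s) t') t
      = c ^ 2 * (m₂ - m₁) * Real.exp (h x t) * (1 - Real.exp (h x t))
        / (Real.exp (h x t) + 1) ^ 3 := by
    have heq : (fun t' => deriv (fun s => u x s) t')
        = fun t' => c * (m₂ - m₁) * Real.exp (h x t') / (Real.exp (h x t') + 1) ^ 2 :=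
      funext hut
    rw [heq]
    exact (hasDerivAt_kink' m₁ m₂ c _ hφt t).deriv
  have huxx : deriv (fun x' => deriv (fun y => u y t) x') x
      = a ^ 2 * (m₂ - m₁) * Real.exp (h x t) * (1 - Real.exp (h x t))
        / (Real.exp (h x t) + 1) ^ 3 := by
    have heq : (fun x' => deriv (fun y => u y t) x')
        = fun x' => a * (m₂ - m₁) * Real.exp (h x' t) / (Real.exp (h x' t) + 1) ^ 2 :=
      funext hux
    rw [heq]
    exact (hasDerivAt_kink' m₁ m₂ a _ hφx x).deriv
  -- coefficient identities
  have hsne : Real.sqrt (2 * τ) ≠ 0 := by rw [hsmul]; positivity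
  have h1 : τ * c ^ 2 = (m₁ - m₂) ^ 2 / 8 := by
    rw [hc, hsmul]
    field_simp
    linear_combination (-4*(m₁-m₂)^2*(Real.sqrt τ*Real.sqrt τ))*hs2sq - 8*(m₁-m₂)^2*hstsq
  have h2 : a ^ 2 = 9 * (m₁ - m₂) ^ 2 / 8 := by
    rw [ha, hc, hsmul]
    field_simp
    linear_combination (-36*(m₁-m₂)^2)*hs2sq
  have h3 : 2 * Real.sqrt 2 * a = 3 * (m₁ - m₂) := by
    rw [ha, hc, hsmul]
    field_simp
  have h4 : B * c = -(m₁ + m₂) * (m₁ - m₂) / 2 := by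
    rw [hB, hc, hsmul]
    have hm3 : m₃ = -(m₁ + m₂) / 2 := by linarith
    rw [hm3]
    field_simp
    linear_combination (2*(m₁+m₂)*(m₁-m₂))*hs2sq
  rw [hutt, huxx, hux, hut, hu]
  set E := Real.exp (h x t) with hE
  have hEpos : 0 < E := Real.exp_pos _
  have hEne : E + 1 ≠ 0 := by positivity
  set s := Real.sqrt 2 with hs
  have num : τ * (c ^ 2 * (m₂ - m₁) * E * (1 - E)) - a ^ 2 * (m₂ - m₁) * E * (1 - E)
      + 2 * s * (m₂ * E + m₁) * (a * (m₂ - m₁) * E) + B * c * (m₂ - m₁) * E * (E + 1)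
      = ((m₂ - m₁) * E) * (m₁ - m₂) * ((m₂ * E + m₁) - m₃ * (E + 1)) := by
    linear_combination ((m₂ - m₁) * E * (1 - E)) * h1 - ((m₂ - m₁) * E * (1 - E)) * h2
      + ((m₂ * E + m₁) * (m₂ - m₁) * E) * h3 + ((m₂ - m₁) * E * (E + 1)) * h4
      + ((m₂ - m₁) * E * (m₁ - m₂) * (E + 1) / 2) * hm
  calc τ * (c ^ 2 * (m₂ - m₁) * E * (1 - E) / (E + 1) ^ 3)
        - a ^ 2 * (m₂ - m₁) * E * (1 - E) / (E + 1) ^ 3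
        + 2 * s * ((m₂ * E + m₁) / (E + 1)) * (a * (m₂ - m₁) * E / (E + 1) ^ 2)
        + B * (c * (m₂ - m₁) * E / (E + 1) ^ 2)
      = (τ * (c ^ 2 * (m₂ - m₁) * E * (1 - E)) - a ^ 2 * (m₂ - m₁) * E * (1 - E)
          + 2 * s * (m₂ * E + m₁) * (a * (m₂ - m₁) * E)
          + B * c * (m₂ - m₁) * E * (E + 1)) / (E + 1) ^ 3 := by
        field_simp
    _ = (((m₂ - m₁) * E) * (m₁ - m₂) * ((m₂ * E + m₁) - m₃ * (E + 1))) / (E + 1) ^ 3 := by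
        rw [num]
    _ = ((m₂ * E + m₁) / (E + 1) - m₁) * ((m₂ * E + m₁) / (E + 1) - m₂)
          * ((m₂ * E + m₁) / (E + 1) - m₃) := by
        field_simp
        ring
end

section
/- Let M, Q : ℝ × ℝ → ℝ be differentiable, h : ℝ × ℝ → ℝ differentiable, and u = (M·e^h + Q)/(e^h + 1). Suppose M(x,t) = √(2τ)·h₂_t − √2·h₂_x + m₁ and M − Q = √(2τ)·h₁_t − √2·h₁_x for differentiable h₁, h₂. Then with h = h₂ − h₁ + log(1 + e^{h₁}), one has u − m₁ = √(2τ)·h_t − √2·h_x everywhere. -/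
/-! Write `L f = √(2τ) ∂ₜf - √2 ∂ₓf`. This first-order operator is a derivation, so
`L (log (1 + e^{h₁})) = e^{h₁} / (1 + e^{h₁}) · L h₁` and therefore
`L h = L h₂ - L h₁ / (1 + e^{h₁}) = (M - m₁) - (M - Q) / (1 + e^{h₁})`,
which is exactly `u - m₁`. -/

open Real

lemma hasDerivAt_log_one_add_exp {f : ℝ → ℝ} {f' t : ℝ} (hf : HasDerivAt f f' t) :
    HasDerivAt (fun s => log (1 + exp (f s))) (exp (f t) / (1 + exp (f t)) * f') t := by
  have h := ((hf.exp).const_add 1).log (by positivity)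
  convert h using 1
  ring

lemma deriv_sub_add_log_one_add_exp {f g : ℝ → ℝ} {t : ℝ} (hf : DifferentiableAt ℝ f t)
    (hg : DifferentiableAt ℝ g t) :
    deriv (fun s => g s - f s + log (1 + exp (f s))) t
      = deriv g t - deriv f t / (1 + exp (f t)) := by
  have h : HasDerivAt (fun s => g s - f s + log (1 + exp (f s)))
      (deriv g t - deriv f t + exp (f t) / (1 + exp (f t)) * deriv f t) t :=
    (hg.hasDerivAt.sub hf.hasDerivAt).add (hasDerivAt_log_one_add_exp hf.hasDerivAt)
  rw [h.deriv]
  field_simp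
  ring

theorem stmt_13_general (τ m₁ : ℝ) (M Q h₁ h₂ : ℝ → ℝ → ℝ)
    (hd1 : ∀ x, Differentiable ℝ (fun t => h₁ x t))
    (hd1' : ∀ t, Differentiable ℝ (fun x => h₁ x t))
    (hd2 : ∀ x, Differentiable ℝ (fun t => h₂ x t))
    (hd2' : ∀ t, Differentiable ℝ (fun x => h₂ x t))
    (hM : ∀ x t, M x t = Real.sqrt (2 * τ) * deriv (fun t' => h₂ x t') t
      - Real.sqrt 2 * deriv (fun x' => h₂ x' t) x + m₁)
    (hMQ : ∀ x t, M x t - Q x t = Real.sqrt (2 * τ) * deriv (fun t' => h₁ x t') t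
      - Real.sqrt 2 * deriv (fun x' => h₁ x' t) x)
    (h : ℝ → ℝ → ℝ)
    (hh : ∀ x t, h x t = h₂ x t - h₁ x t + Real.log (1 + Real.exp (h₁ x t)))
    (u : ℝ → ℝ → ℝ)
    (hu : ∀ x t, u x t = (M x t * Real.exp (h₁ x t) + Q x t) / (Real.exp (h₁ x t) + 1)) :
    ∀ x t, u x t - m₁ = Real.sqrt (2 * τ) * deriv (fun t' => h x t') t
      - Real.sqrt 2 * deriv (fun x' => h x' t) x := by
  intro x t
  have hht : (fun t' => h x t') = fun t' => h₂ x t' - h₁ x t' + log (1 + exp (h₁ x t')) :=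
    funext (hh x)
  have hhx : (fun x' => h x' t) = fun x' => h₂ x' t - h₁ x' t + log (1 + exp (h₁ x' t)) :=
    funext fun x' => hh x' t
  rw [hht, hhx, deriv_sub_add_log_one_add_exp (hd1 x t) (hd2 x t),
    deriv_sub_add_log_one_add_exp (hd1' t x) (hd2' t x), hu]
  rw [add_comm (exp _) 1]
  have hE : 1 + exp (h₁ x t) ≠ 0 := by positivity
  field_simp
  linear_combination (1 + exp (h₁ x t)) * hM x t - hMQ x t

theorem stmt_13 (τ m₁ : ℝ) (hτ : 0 < τ) (M Q h₁ h₂ : ℝ → ℝ → ℝ)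
    (hd1 : ∀ x, Differentiable ℝ (fun t => h₁ x t))
    (hd1' : ∀ t, Differentiable ℝ (fun x => h₁ x t))
    (hd2 : ∀ x, Differentiable ℝ (fun t => h₂ x t))
    (hd2' : ∀ t, Differentiable ℝ (fun x => h₂ x t))
    (hMd : ∀ x, Differentiable ℝ (fun t => M x t))
    (hMd' : ∀ t, Differentiable ℝ (fun x => M x t))
    (hQd : ∀ x, Differentiable ℝ (fun t => Q x t))
    (hQd' : ∀ t, Differentiable ℝ (fun x => Q x t))
    (hM : ∀ x t, M x t = Real.sqrt (2 * τ) * deriv (fun t' => h₂ x t') t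
      - Real.sqrt 2 * deriv (fun x' => h₂ x' t) x + m₁)
    (hMQ : ∀ x t, M x t - Q x t = Real.sqrt (2 * τ) * deriv (fun t' => h₁ x t') t
      - Real.sqrt 2 * deriv (fun x' => h₁ x' t) x)
    (h : ℝ → ℝ → ℝ)
    (hh : ∀ x t, h x t = h₂ x t - h₁ x t + Real.log (1 + Real.exp (h₁ x t)))
    (u : ℝ → ℝ → ℝ)
    (hu : ∀ x t, u x t = (M x t * Real.exp (h₁ x t) + Q x t) / (Real.exp (h₁ x t) + 1)) :
    ∀ x t, u x t - m₁ = Real.sqrt (2 * τ) * deriv (fun t' => h x t') t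
      - Real.sqrt 2 * deriv (fun x' => h x' t) x :=
  stmt_13_general τ m₁ M Q h₁ h₂ hd1 hd1' hd2 hd2' hM hMQ h hh u hu
end
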